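/- Let N ≥ 2 and let 𝔥 : Matrix V̂ V (ZMod N) have row sums of nonzero entries at most D̂ (card {v : 𝔥 v̂ v ≠ 0} ≤ D̂ for each v̂) and column counts at most D (card {v̂ : 𝔥 v̂ v ≠ 0} ≤ D for each v), and set Δ := max(D, D̂) with Δ ≥ 3. Assume that for every prime p dividing N, the bipartite graph on V̂ ⊕ V with an edge between v̂ and v iff the image of 𝔥 v̂ v in ZMod p is nonzero, is connected. Then the number of vectors a : V → ZMod N with 𝔥.mulVec a = 0 satisfies card {a | 𝔥.mulVec a = 0} ≤ N^{(1 − 1/(2Δ))·card V} (as an inequality of real numbers). -/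

import Mathlib

open scoped Classical
open Matrix

section

variable {Vhat V : Type*}

/-- The bipartite graph on `Vhat ⊕ V` determined by the reduction of the weighted
biadjacency matrix `𝔥` (entries in `ZMod N`) modulo a divisor `p` of `N`: there is an edge
between `v̂` and `v` iff the image of `𝔥 v̂ v` in `ZMod p` is nonzero. -/
def redBipGraph {N : ℕ} (𝔥 : Matrix Vhat V (ZMod N)) {p : ℕ} (h : p ∣ N) :
    SimpleGraph (Vhat ⊕ V) where
  Adj x y := match x, y with
    | Sum.inl a, Sum.inr b => ZMod.castHom h (ZMod p) (𝔥 a b) ≠ 0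
    | Sum.inr b, Sum.inl a => ZMod.castHom h (ZMod p) (𝔥 a b) ≠ 0
    | _, _ => False
  symm := by constructor; intro x y hxy; cases x <;> cases y <;> simp_all
  loopless := by constructor; intro x hx; cases x <;> simp_all


/-- Prime case: kernel bound via row-space support argument. -/
lemma prime_case_rank [Fintype Vhat] [Fintype V] [DecidableEq V]
    {p : ℕ} (hp : p.Prime) (B : Matrix Vhat V (ZMod p)) (Dhat : ℕ)
    (hrow : ∀ w : Vhat, (Finset.univ.filter fun v : V => B w v ≠ 0).card ≤ Dhat)
    (hcols : ∀ v : V, ∃ w, B w v ≠ 0) :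
    Fintype.card V ≤ Dhat * B.rank := by
  haveI : Fact p.Prime := ⟨hp⟩
  obtain ⟨b, hbt, hspan, hli⟩ := exists_linearIndependent (ZMod p) (Set.range fun w => B w)
  have hbfin : b.Finite := (Set.finite_range _).subset hbt
  haveI : Fintype b := hbfin.fintype
  -- card of b equals rank of B
  have hcard : b.toFinset.card = B.rank := by
    have h1 : Module.finrank (ZMod p) (Submodule.span (ZMod p) b) = b.toFinset.card :=
      finrank_span_set_eq_card hli
    have h2 : Submodule.span (ZMod p) (Set.range fun w => B w)
        = LinearMap.range (Bᵀ.mulVecLin) := by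
      rw [Matrix.range_mulVecLin]; rfl
    rw [← Matrix.rank_transpose, Matrix.rank, ← h2, ← hspan, h1]
  set U : Finset V := b.toFinset.biUnion
    (fun r => Finset.univ.filter fun v : V => r v ≠ 0) with hU
  have hUcard : U.card ≤ b.toFinset.card * Dhat := by
    apply Finset.card_biUnion_le_card_mul
    intro r hr
    rw [Set.mem_toFinset] at hr
    obtain ⟨w, rfl⟩ := hbt hr
    exact hrow w
  have hUuniv : ∀ v : V, v ∈ U := by
    intro v
    obtain ⟨w, hw⟩ := hcols v
    by_contra hv
    have hall : ∀ r ∈ b, r v = 0 := by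
      intro r hr
      by_contra hrv
      exact hv (Finset.mem_biUnion.2 ⟨r, Set.mem_toFinset.2 hr,
        Finset.mem_filter.2 ⟨Finset.mem_univ _, hrv⟩⟩)
    have hle : Submodule.span (ZMod p) b ≤ LinearMap.ker (LinearMap.proj (R := ZMod p)
        (φ := fun _ : V => ZMod p) v) := by
      rw [Submodule.span_le]
      intro r hr
      simpa [LinearMap.mem_ker] using hall r hr
    have hmem : B w ∈ Submodule.span (ZMod p) b := by
      rw [hspan]
      exact Submodule.subset_span ⟨w, rfl⟩
    have := hle hmem
    simp only [LinearMap.mem_ker, LinearMap.proj_apply] at this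
    exact hw this
  have hUeq : U = Finset.univ := Finset.eq_univ_iff_forall.2 hUuniv
  calc Fintype.card V = U.card := by rw [hUeq, Finset.card_univ]
    _ ≤ b.toFinset.card * Dhat := hUcard
    _ = Dhat * B.rank := by rw [hcard, Nat.mul_comm]


lemma prime_case_count [Fintype Vhat] [Fintype V] [DecidableEq V]
    {p : ℕ} (hp : p.Prime) (B : Matrix Vhat V (ZMod p)) (Dhat Δ : ℕ)
    (hD : Dhat ≤ 2 * Δ)
    (hrow : ∀ w : Vhat, (Finset.univ.filter fun v : V => B w v ≠ 0).card ≤ Dhat)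
    (hcols : ∀ v : V, ∃ w, B w v ≠ 0) :
    Nat.card {a : V → ZMod p // B.mulVec a = 0} ^ (2 * Δ)
      ≤ p ^ ((2 * Δ - 1) * Fintype.card V) := by
  haveI : Fact p.Prime := ⟨hp⟩
  set n := Fintype.card V with hn
  set r := B.rank with hr
  -- card of kernel
  have hker : Nat.card {a : V → ZMod p // B.mulVec a = 0}
      = p ^ Module.finrank (ZMod p) (LinearMap.ker B.mulVecLin) := by
    have e1 : {a : V → ZMod p // B.mulVec a = 0} ≃ LinearMap.ker B.mulVecLin :=
      Equiv.subtypeEquivRight fun a => by simp [LinearMap.mem_ker, Matrix.mulVecLin_apply]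
    rw [Nat.card_congr e1, Nat.card_eq_fintype_card,
      Module.card_eq_pow_finrank (K := ZMod p), ZMod.card]
  have hrn : r + Module.finrank (ZMod p) (LinearMap.ker B.mulVecLin) = n := by
    have := LinearMap.finrank_range_add_finrank_ker B.mulVecLin
    rwa [Module.finrank_fintype_fun_eq_card] at this
  have hrank := prime_case_rank hp B Dhat hrow hcols
  rw [← hn, ← hr] at hrank
  -- exponent inequality
  have hkle : Module.finrank (ZMod p) (LinearMap.ker B.mulVecLin) = n - r := by omega
  rw [hker, hkle, ← pow_mul]
  apply Nat.pow_le_pow_right hp.pos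
  have h1 : n ≤ r * (2 * Δ) := le_trans hrank (by nlinarith)
  calc (n - r) * (2 * Δ) = n * (2 * Δ) - r * (2 * Δ) := Nat.sub_mul _ _ _
    _ ≤ n * (2 * Δ) - n := Nat.sub_le_sub_left h1 _
    _ = (2 * Δ) * n - 1 * n := by rw [Nat.mul_comm, Nat.one_mul]
    _ = (2 * Δ - 1) * n := (Nat.sub_mul _ _ _).symm


/-- The additive map `ZMod p →+ ZMod (M * p)` sending `1` to `M`. -/
noncomputable def chiHom (M p : ℕ) : ZMod p →+ ZMod (M * p) :=
  ZMod.lift p ⟨(AddMonoidHom.mulRight ((M : ℕ) : ZMod (M * p))).comp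
    (Int.castAddHom (ZMod (M * p))), by
      simp only [AddMonoidHom.comp_apply, Int.coe_castAddHom, Int.cast_natCast,
        AddMonoidHom.mulRight_apply]
      rw [← Nat.cast_mul, mul_comm p M, ZMod.natCast_self]⟩

lemma chiHom_natCast (M p : ℕ) (k : ℕ) :
    chiHom M p (k : ZMod p) = (k : ZMod (M * p)) * M := by
  have := ZMod.lift_coe p ⟨(AddMonoidHom.mulRight ((M : ℕ) : ZMod (M * p))).comp
    (Int.castAddHom (ZMod (M * p))), by
      simp only [AddMonoidHom.comp_apply, Int.coe_castAddHom, Int.cast_natCast,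
        AddMonoidHom.mulRight_apply]
      rw [← Nat.cast_mul, mul_comm p M, ZMod.natCast_self]⟩ (k : ℤ)
  simpa [chiHom] using this

lemma chiHom_injective (M p : ℕ) (hM : 0 < M) (hp : 0 < p) :
    Function.Injective (chiHom M p) := by
  haveI : NeZero p := ⟨hp.ne'⟩
  rw [injective_iff_map_eq_zero]
  intro x hx
  have hxv : ((x.val : ZMod p)) = x := ZMod.natCast_zmod_val x
  rw [← hxv, chiHom_natCast, ← Nat.cast_mul] at hx
  rw [ZMod.natCast_eq_zero_iff] at hx
  have : p ∣ x.val := by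
    rcases hx with ⟨c, hc⟩
    have h2 : M * (x.val) = M * (p * c) := by rw [mul_comm M x.val, hc, mul_assoc]
    exact ⟨c, Nat.eq_of_mul_eq_mul_left hM h2⟩
  have hlt : x.val < p := ZMod.val_lt x
  have : x.val = 0 := Nat.eq_zero_of_dvd_of_lt this hlt
  rw [← hxv, this, Nat.cast_zero]



lemma chiHom_semilinear (M p : ℕ) (hM : 0 < M) (hp : 0 < p)
    (c : ZMod (M * p)) (y : ZMod p) :
    chiHom M p (ZMod.castHom (dvd_mul_left p M) (ZMod p) c * y) = c * chiHom M p y := by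
  haveI : NeZero p := ⟨hp.ne'⟩
  haveI : NeZero (M * p) := ⟨by positivity⟩
  have h1 : ZMod.castHom (dvd_mul_left p M) (ZMod p) c = ((c.val : ℕ) : ZMod p) := by
    rw [ZMod.castHom_apply]; exact (ZMod.natCast_val c).symm
  have h2 : y = ((y.val : ℕ) : ZMod p) := (ZMod.natCast_zmod_val y).symm
  rw [h1, h2, ← Nat.cast_mul, chiHom_natCast, chiHom_natCast]
  push_cast
  rw [ZMod.natCast_zmod_val]
  ring

lemma chiHom_div (M p : ℕ) (hM : 0 < M) (hp : 0 < p) (x : ZMod (M * p))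
    (hx : ZMod.castHom (dvd_mul_right M p) (ZMod M) x = 0) :
    chiHom M p ((x.val / M : ℕ) : ZMod p) = x := by
  haveI : NeZero (M * p) := ⟨by positivity⟩
  have hdvd : M ∣ x.val := by
    rw [ZMod.castHom_apply, ← ZMod.natCast_val x, ZMod.natCast_eq_zero_iff] at hx
    exact hx
  rw [chiHom_natCast, ← Nat.cast_mul, Nat.div_mul_cancel hdvd, ZMod.natCast_zmod_val]


lemma devissage [Fintype Vhat] [Fintype V] (M p : ℕ) (hM : 0 < M) (hp : 0 < p)
    (𝔥 : Matrix Vhat V (ZMod (M * p))) :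
    Nat.card {a : V → ZMod (M * p) // 𝔥.mulVec a = 0}
      ≤ Nat.card {a : V → ZMod p //
            (𝔥.map (ZMod.castHom (dvd_mul_left p M) (ZMod p))).mulVec a = 0}
        * Nat.card {a : V → ZMod M //
            (𝔥.map (ZMod.castHom (dvd_mul_right M p) (ZMod M))).mulVec a = 0} := by
  haveI : NeZero p := ⟨hp.ne'⟩
  haveI : NeZero M := ⟨hM.ne'⟩
  haveI : NeZero (M * p) := ⟨by positivity⟩
  set fM := ZMod.castHom (dvd_mul_right M p) (ZMod M) with hfM
  set fp := ZMod.castHom (dvd_mul_left p M) (ZMod p) with hfp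
  set KN := {a : V → ZMod (M * p) // 𝔥.mulVec a = 0} with hKN
  set Kp := {a : V → ZMod p // (𝔥.map fp).mulVec a = 0} with hKp
  set KM := {a : V → ZMod M // (𝔥.map fM).mulVec a = 0} with hKM
  -- the reduction map
  have Fprop : ∀ a : KN, (𝔥.map fM).mulVec (fun v => fM (a.1 v)) = 0 := by
    intro a
    funext w
    have := RingHom.map_mulVec fM 𝔥 a.1 w
    rw [a.2] at this
    simp only [Pi.zero_apply, map_zero] at this
    exact this.symm
  set F : KN → KM := fun a => ⟨fun v => fM (a.1 v), Fprop a⟩ with hF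
  -- fibers inject into Kp
  have fiber_le : ∀ y : KM, Nat.card {x : KN // F x = y} ≤ Nat.card Kp := by
    intro y
    rcases isEmpty_or_nonempty {x : KN // F x = y} with he | hne
    · simp [Nat.card_of_isEmpty]
    · obtain ⟨x₀⟩ := hne
      -- construct the injection
      have key : ∀ x : {x : KN // F x = y}, ∃ b : Kp,
          ∀ v, chiHom M p (b.1 v) = x.1.1 v - x₀.1.1 v := by
        intro x
        set d : V → ZMod (M * p) := x.1.1 - x₀.1.1 with hd
        have hd1 : 𝔥.mulVec d = 0 := by
          rw [hd, Matrix.mulVec_sub, x.1.2, x₀.1.2, sub_self]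
        have hd2 : ∀ v, fM (d v) = 0 := by
          intro v
          have hx : (F x.1).1 v = (F x₀.1).1 v := by rw [x.2, x₀.2]
          simp only [hF] at hx
          simp only [hd, Pi.sub_apply, map_sub, hx, sub_self]
        set b : V → ZMod p := fun v => (((d v).val / M : ℕ) : ZMod p) with hb
        have hbv : ∀ v, chiHom M p (b v) = d v := fun v =>
          chiHom_div M p hM hp (d v) (hd2 v)
        have hbmem : (𝔥.map fp).mulVec b = 0 := by
          funext w
          simp only [Pi.zero_apply]
          apply chiHom_injective M p hM hp
          rw [map_zero]
          have hsum : (𝔥.map fp).mulVec b w = ∑ v, fp (𝔥 w v) * b v := by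
            simp [Matrix.mulVec, dotProduct, Matrix.map_apply]
          rw [hsum, map_sum]
          have : ∀ v, chiHom M p (fp (𝔥 w v) * b v) = 𝔥 w v * d v := by
            intro v
            rw [hfp, chiHom_semilinear M p hM hp, hbv]
          rw [Finset.sum_congr rfl fun v _ => this v]
          have : ∑ v, 𝔥 w v * d v = 𝔥.mulVec d w := by
            simp [Matrix.mulVec, dotProduct]
          rw [this, hd1]
          rfl
        exact ⟨⟨b, hbmem⟩, fun v => by rw [hbv]; simp [hd]⟩
      choose G hG using key
      have hGinj : Function.Injective G := by
        intro x x' hxx'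
        have : ∀ v, x.1.1 v - x₀.1.1 v = x'.1.1 v - x₀.1.1 v := by
          intro v
          rw [← hG x v, ← hG x' v, hxx']
        have : x.1.1 = x'.1.1 := by
          funext v
          have h := this v
          exact sub_left_injective h
        exact Subtype.ext (Subtype.ext this)
      exact Nat.card_le_card_of_injective G hGinj
  -- sum over fibers
  have hcard : Nat.card KN = ∑ y : KM, Nat.card {x : KN // F x = y} := by
    rw [← Nat.card_congr (Equiv.sigmaFiberEquiv F)]
    rw [Nat.card_eq_fintype_card, Fintype.card_sigma]
    simp [Nat.card_eq_fintype_card]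
  rw [hcard]
  calc ∑ y : KM, Nat.card {x : KN // F x = y} ≤ ∑ _y : KM, Nat.card Kp :=
        Finset.sum_le_sum fun y _ => fiber_le y
    _ = Nat.card KM * Nat.card Kp := by
        rw [Finset.sum_const, Finset.card_univ, smul_eq_mul, Nat.card_eq_fintype_card, Nat.card_eq_fintype_card]
    _ = Nat.card Kp * Nat.card KM := Nat.mul_comm _ _


lemma main_ind [Fintype Vhat] [Fintype V] [DecidableEq V] (Dhat Δ : ℕ) (hD : Dhat ≤ 2 * Δ) :
    ∀ N : ℕ, 0 < N → ∀ 𝔥 : Matrix Vhat V (ZMod N),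
      (∀ w : Vhat, (Finset.univ.filter fun v : V => 𝔥 w v ≠ 0).card ≤ Dhat) →
      (∀ (q : ℕ), q.Prime → ∀ hq : q ∣ N, ∀ v : V, ∃ w,
          ZMod.castHom hq (ZMod q) (𝔥 w v) ≠ 0) →
      Nat.card {a : V → ZMod N // 𝔥.mulVec a = 0} ^ (2 * Δ)
        ≤ N ^ ((2 * Δ - 1) * Fintype.card V) := by
  intro N
  induction N using Nat.strong_induction_on with
  | _ N IH =>
  intro hN 𝔥 hrow hcols
  rcases eq_or_lt_of_le (show 1 ≤ N from hN) with h1 | h2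
  · -- N = 1
    subst h1
    have : Nat.card {a : V → ZMod 1 // 𝔥.mulVec a = 0} = 1 := by
      haveI : Unique {a : V → ZMod 1 // 𝔥.mulVec a = 0} :=
        uniqueOfSubsingleton ⟨0, Matrix.mulVec_zero 𝔥⟩
      exact Nat.card_unique
    rw [this]
    simp
  · -- N ≥ 2
    obtain ⟨p, M, hp, hM, hMlt, rfl⟩ :
        ∃ p M, p.Prime ∧ 0 < M ∧ M < N ∧ N = M * p := by
      refine ⟨N.minFac, N / N.minFac, Nat.minFac_prime (by omega), ?_, ?_, ?_⟩
      · exact Nat.div_pos (Nat.minFac_le (by omega)) N.minFac_pos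
      · exact Nat.div_lt_self (by omega) (Nat.minFac_prime (by omega)).one_lt
      · exact (Nat.div_mul_cancel N.minFac_dvd).symm
    have hdev := devissage M p hM hp.pos 𝔥
    set Bp := 𝔥.map (ZMod.castHom (dvd_mul_left p M) (ZMod p)) with hBp
    set BM := 𝔥.map (ZMod.castHom (dvd_mul_right M p) (ZMod M)) with hBM
    have hrowp : ∀ w : Vhat, (Finset.univ.filter fun v : V => Bp w v ≠ 0).card ≤ Dhat := by
      intro w
      refine le_trans (Finset.card_le_card ?_) (hrow w)
      intro v hv
      simp only [Finset.mem_filter, Finset.mem_univ, true_and] at hv ⊢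
      intro h0
      exact hv (by rw [hBp, Matrix.map_apply, h0, map_zero])
    have hrowM : ∀ w : Vhat, (Finset.univ.filter fun v : V => BM w v ≠ 0).card ≤ Dhat := by
      intro w
      refine le_trans (Finset.card_le_card ?_) (hrow w)
      intro v hv
      simp only [Finset.mem_filter, Finset.mem_univ, true_and] at hv ⊢
      intro h0
      exact hv (by rw [hBM, Matrix.map_apply, h0, map_zero])
    have hcolsp : ∀ v : V, ∃ w, Bp w v ≠ 0 := by
      intro v
      obtain ⟨w, hw⟩ := hcols p hp (dvd_mul_left p M) v
      exact ⟨w, hw⟩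
    have hcolsM : ∀ (q : ℕ), q.Prime → ∀ hq : q ∣ M, ∀ v : V, ∃ w,
        ZMod.castHom hq (ZMod q) (BM w v) ≠ 0 := by
      intro q hq hqM v
      obtain ⟨w, hw⟩ := hcols q hq (hqM.trans (dvd_mul_right M p)) v
      refine ⟨w, ?_⟩
      have hcomp := ZMod.castHom_comp hqM (dvd_mul_right M p)
      have : ZMod.castHom hqM (ZMod q) (BM w v)
          = ZMod.castHom (hqM.trans (dvd_mul_right M p)) (ZMod q) (𝔥 w v) := by
        rw [hBM, Matrix.map_apply, ← RingHom.comp_apply, hcomp]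
      rw [this]
      exact hw
    have hKp := prime_case_count hp Bp Dhat Δ hD hrowp hcolsp
    have hKM := IH M hMlt hM BM hrowM hcolsM
    calc Nat.card {a : V → ZMod (M * p) // 𝔥.mulVec a = 0} ^ (2 * Δ)
        ≤ (Nat.card {a : V → ZMod p // Bp.mulVec a = 0}
            * Nat.card {a : V → ZMod M // BM.mulVec a = 0}) ^ (2 * Δ) :=
          Nat.pow_le_pow_left hdev _
      _ = Nat.card {a : V → ZMod p // Bp.mulVec a = 0} ^ (2 * Δ)
            * Nat.card {a : V → ZMod M // BM.mulVec a = 0} ^ (2 * Δ) := mul_pow _ _ _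
      _ ≤ p ^ ((2 * Δ - 1) * Fintype.card V) * M ^ ((2 * Δ - 1) * Fintype.card V) :=
          Nat.mul_le_mul hKp hKM
      _ = (M * p) ^ ((2 * Δ - 1) * Fintype.card V) := by rw [← mul_pow, Nat.mul_comm]


/-- STATEMENT 11: let `𝔥` be a matrix over `ZMod N` (`N ≥ 2`) with at most `D̂` nonzero
entries in each row and at most `D` nonzero entries in each column, `Δ = max(D, D̂) ≥ 3`,
and suppose that for every prime `p ∣ N` the bipartite graph of the mod-`p` reduction of `𝔥`
is connected.  Then the number of `a` with `𝔥.mulVec a = 0` is at most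
`N^{(1 − 1/(2Δ))·|V|}`. -/
theorem count_kernel_biadjacency_zmod
    [Fintype Vhat] [Fintype V] [DecidableEq Vhat] [DecidableEq V]
    [Nonempty Vhat] [Nonempty V]
    (N : ℕ) (hN : 2 ≤ N) (𝔥 : Matrix Vhat V (ZMod N)) (D Dhat : ℕ)
    (hrow : ∀ w : Vhat, (Finset.univ.filter fun v : V => 𝔥 w v ≠ 0).card ≤ Dhat)
    (hcol : ∀ v : V, (Finset.univ.filter fun w : Vhat => 𝔥 w v ≠ 0).card ≤ D)
    (hΔ : 3 ≤ max D Dhat)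
    (hconn : ∀ (p : ℕ), p.Prime → ∀ h : p ∣ N, (redBipGraph 𝔥 h).Connected) :
    (Nat.card {a : V → ZMod N // 𝔥.mulVec a = 0} : ℝ) ≤
      (N : ℝ) ^ ((1 - 1 / (2 * (max D Dhat : ℝ))) * Fintype.card V) := by
  set Δ := max D Dhat with hΔdef
  -- columns are nonzero mod every prime divisor
  have hcols : ∀ (q : ℕ), q.Prime → ∀ hq : q ∣ N, ∀ v : V, ∃ w,
      ZMod.castHom hq (ZMod q) (𝔥 w v) ≠ 0 := by
    intro q hq hqN v
    obtain ⟨w₀⟩ := ‹Nonempty Vhat›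
    obtain ⟨walk⟩ := (hconn q hq hqN) (Sum.inr v) (Sum.inl w₀)
    cases walk with
    | cons hadj _ =>
      rename_i x _
      cases x with
      | inl w => exact ⟨w, hadj⟩
      | inr v' => exact absurd hadj (by simp [redBipGraph])
  have hD : Dhat ≤ 2 * Δ := le_trans (le_max_right D Dhat) (by omega)
  have hnat := main_ind Dhat Δ hD N (by omega) 𝔥 hrow hcols
  -- convert to real rpow inequality
  set c := Nat.card {a : V → ZMod N // 𝔥.mulVec a = 0} with hc
  set n := Fintype.card V with hn
  have hΔ3 : 3 ≤ Δ := hΔ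
  have h2Δ : (0:ℝ) < 2 * (Δ : ℝ) := by positivity
  have hreal : (c:ℝ) ^ (2 * Δ : ℕ) ≤ (N:ℝ) ^ ((2 * Δ - 1) * n : ℕ) := by
    exact_mod_cast hnat
  have hrpow : ((c:ℝ) ^ ((2 * Δ : ℕ) : ℝ)) ^ (1 / (2 * (Δ:ℝ)))
      ≤ ((N:ℝ) ^ (((2 * Δ - 1) * n : ℕ) : ℝ)) ^ (1 / (2 * (Δ:ℝ))) := by
    apply Real.rpow_le_rpow (by positivity) _ (by positivity)
    rw [Real.rpow_natCast, Real.rpow_natCast]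
    exact hreal
  have hL : ((c:ℝ) ^ ((2 * Δ : ℕ) : ℝ)) ^ (1 / (2 * (Δ:ℝ))) = (c:ℝ) := by
    rw [← Real.rpow_mul (by positivity)]
    push_cast
    rw [mul_one_div, div_self h2Δ.ne', Real.rpow_one]
  have hR : ((N:ℝ) ^ (((2 * Δ - 1) * n : ℕ) : ℝ)) ^ (1 / (2 * (Δ:ℝ)))
      = (N:ℝ) ^ ((1 - 1 / (2 * (Δ : ℝ))) * n) := by
    rw [← Real.rpow_mul (by positivity)]
    congr 1
    have : ((2 * Δ - 1 : ℕ) : ℝ) = 2 * (Δ:ℝ) - 1 := by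
      have : 1 ≤ 2 * Δ := by omega
      push_cast [Nat.cast_sub this]
      ring
    push_cast [this]
    field_simp
  rw [hL, hR] at hrpow
  have hmax : (Max.max (D:ℝ) (Dhat:ℝ)) = ((Δ : ℕ) : ℝ) := by
    rw [hΔdef]; exact (Nat.cast_max D Dhat).symm
  rw [hmax]
  exact hrpow


end
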